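/- Fix an integer d ≥ 1. For a finitely supported function h : ℤ^d → ℝ and λ > 0 define the H₁-energy E_λ(h) = λ·∑_{x∈ℤ^d} h(x)² + (1/2)·∑_{x∈ℤ^d} ∑_{z : |z|=1} (h(x+z) − h(x))². Then there exists a constant C = C(d) such that for every λ with 0 < λ ≤ 1 and every finitely supported g' : ℤ^d → ℝ, if g_ext : ℤ^d → ℝ is defined by g_ext(x) = g'(x) for x ≠ 0 and g_ext(0) = (1/(2d))·∑_{|z|=1} g'(z), then E_λ(g_ext) ≤ C·( E_λ(g') + ( g'(0) − ∑_{|z|=1} g'(z) )² ). -/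
import Mathlib


open Finset in
/-- The 2d signed standard basis vectors of `ℤ^d`. -/
noncomputable def nbrs (d : ℕ) : Finset (Fin d → ℤ) :=
  Finset.image
    (fun p : Fin d × Bool => fun i => if i = p.1 then (if p.2 then 1 else -1) else 0)
    Finset.univ

/-- The `H₁`-energy `E_λ(h)` of a finitely supported `h : ℤ^d → ℝ`. -/
noncomputable def Eform (d : ℕ) (lam : ℝ) (h : (Fin d → ℤ) → ℝ) : ℝ :=
  lam * ∑ᶠ x : Fin d → ℤ, (h x) ^ 2 +
    (1 / 2) * ∑ᶠ x : Fin d → ℤ, ∑ z ∈ nbrs d, (h (x + z) - h x) ^ 2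

lemma nbrs_ne_zero {d : ℕ} {z : Fin d → ℤ} (hz : z ∈ nbrs d) : z ≠ 0 := by
  simp only [nbrs, Finset.mem_image] at hz
  obtain ⟨⟨i, b⟩, -, rfl⟩ := hz
  intro h
  have := congrFun h i
  cases b <;> simp_all

lemma nbrs_neg_mem {d : ℕ} {z : Fin d → ℤ} (hz : z ∈ nbrs d) : -z ∈ nbrs d := by
  simp only [nbrs, Finset.mem_image] at hz ⊢
  obtain ⟨⟨i, b⟩, -, rfl⟩ := hz
  exact ⟨(i, !b), Finset.mem_univ _, by
    funext j; cases b <;> by_cases h : j = i <;> simp [h]⟩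

lemma nbrs_card (d : ℕ) : (nbrs d).card = 2 * d := by
  rw [nbrs, Finset.card_image_of_injective _ ?_, Finset.card_univ]
  · simp [Fintype.card_prod]; ring
  · rintro ⟨i, b⟩ ⟨j, c⟩ h
    have h1 := congrFun h i
    simp only [if_pos rfl] at h1
    by_cases hij : i = j
    · subst hij
      simp only [if_pos rfl] at h1
      cases b <;> cases c <;> simp_all
    · rw [if_neg hij] at h1
      cases b <;> simp_all

theorem stmt_3 (d : ℕ) (hd : 1 ≤ d) :
    ∃ C : ℝ, ∀ lam : ℝ, 0 < lam → lam ≤ 1 →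
      ∀ g' : (Fin d → ℤ) → ℝ, (Function.support g').Finite →
        Eform d lam
            (fun x => if x = 0 then (1 / (2 * (d : ℝ))) * ∑ z ∈ nbrs d, g' z else g' x)
          ≤ C * (Eform d lam g' + (g' 0 - ∑ z ∈ nbrs d, g' z) ^ 2) := by
  classical
  refine ⟨7, ?_⟩
  intro lam hlam hlam1 g' hsupp
  set S : ℝ := ∑ z ∈ nbrs d, g' z with hSdef
  set a : ℝ := (1 / (2 * (d : ℝ))) * S with hadef
  set gext : (Fin d → ℤ) → ℝ := fun x => if x = 0 then a else g' x with hgextdef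
  have hdR : (0:ℝ) < d := by exact_mod_cast hd
  have hSa : S = 2 * d * a := by rw [hadef]; field_simp
  -- a common big finset
  set K : Finset (Fin d → ℤ) := hsupp.toFinset with hKdef
  set B : Finset (Fin d → ℤ) := insert 0 K with hBdef
  set T : Finset (Fin d → ℤ) :=
    (B ∪ nbrs d) ∪ (nbrs d).biUnion (fun z => B.image (fun y => y - z)) with hTdef
  have hBT : B ⊆ T := (Finset.subset_union_left).trans Finset.subset_union_left
  have h0T : (0 : Fin d → ℤ) ∈ T := hBT (Finset.mem_insert_self _ _)
  have hnT : nbrs d ⊆ T := (Finset.subset_union_right).trans Finset.subset_union_left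
  have hg'B : ∀ x : Fin d → ℤ, g' x ≠ 0 → x ∈ B := by
    intro x hx
    exact Finset.mem_insert_of_mem (by simp [hKdef, hx])
  have hgextB : ∀ x : Fin d → ℤ, gext x ≠ 0 → x ∈ B := by
    intro x hx
    by_cases h0 : x = 0
    · exact h0 ▸ Finset.mem_insert_self _ _
    · rw [hgextdef] at hx; simp only [if_neg h0] at hx; exact hg'B x hx
  -- rewriting Eform as finset sums over T
  have Erw : ∀ h : (Fin d → ℤ) → ℝ, (∀ x, h x ≠ 0 → x ∈ B) →
      Eform d lam h = lam * ∑ x ∈ T, h x ^ 2 +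
        (1 / 2) * ∑ x ∈ T, ∑ z ∈ nbrs d, (h (x + z) - h x) ^ 2 := by
    intro h hB
    have hout : ∀ x : Fin d → ℤ, x ∉ T → h x = 0 ∧ ∀ z ∈ nbrs d, h (x + z) = 0 := by
      intro x hxT
      constructor
      · by_contra hc; exact hxT (hBT (hB x hc))
      · intro z hz
        by_contra hc
        apply hxT
        apply Finset.mem_union_right
        exact Finset.mem_biUnion.2 ⟨z, hz, Finset.mem_image.2 ⟨x + z, hB _ hc, by abel⟩⟩
    rw [Eform]
    congr 1
    · congr 1
      refine finsum_eq_finset_sum_of_support_subset _ ?_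
      intro x hx
      simp only [Function.mem_support] at hx
      by_contra hxT
      exact hx (by rw [(hout x hxT).1]; ring)
    · congr 1
      refine finsum_eq_finset_sum_of_support_subset _ ?_
      intro x hx
      simp only [Function.mem_support] at hx
      by_contra hxT
      refine hx (Finset.sum_eq_zero fun z hz => ?_)
      rw [(hout x hxT).1, (hout x hxT).2 z hz]; ring
  rw [Erw gext hgextB, Erw g' hg'B]
  -- abbreviations
  have hgext0 : gext 0 = a := by simp [hgextdef]
  have hgextne : ∀ x : Fin d → ℤ, x ≠ 0 → gext x = g' x := by
    intro x hx; rw [hgextdef]; simp [hx]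
  -- (i) quadratic term
  have hS1 : ∑ x ∈ T, gext x ^ 2 = ∑ x ∈ T, g' x ^ 2 - g' 0 ^ 2 + a ^ 2 := by
    rw [← Finset.add_sum_erase T _ h0T, ← Finset.add_sum_erase T (fun x => g' x ^ 2) h0T,
      hgext0]
    have : ∑ x ∈ T.erase 0, gext x ^ 2 = ∑ x ∈ T.erase 0, g' x ^ 2 :=
      Finset.sum_congr rfl fun x hx => by rw [hgextne x (Finset.ne_of_mem_erase hx)]
    rw [this]; ring
  -- neighbor-sum helper
  have h0nbrs : (0 : Fin d → ℤ) ∉ nbrs d := fun h => nbrs_ne_zero h rfl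
  have hsum_lin : ∑ z ∈ nbrs d, (g' z * (2 * (g' 0 - a)) + (a ^ 2 - g' 0 ^ 2)) ≤ 0 := by
    rw [Finset.sum_add_distrib, ← Finset.sum_mul, ← hSdef, Finset.sum_const, nbrs_card,
      nsmul_eq_mul, hSa]
    push_cast
    nlinarith [mul_nonneg hdR.le (sq_nonneg (a - g' 0))]
  -- (ii) gradient term
  have hGrad : ∑ x ∈ T, ∑ z ∈ nbrs d, (gext (x + z) - gext x) ^ 2
      ≤ ∑ x ∈ T, ∑ z ∈ nbrs d, (g' (x + z) - g' x) ^ 2 := by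
    have key : ∑ x ∈ T, (∑ z ∈ nbrs d, (gext (x + z) - gext x) ^ 2
        - ∑ z ∈ nbrs d, (g' (x + z) - g' x) ^ 2) ≤ 0 := by
      have hsub : insert (0 : Fin d → ℤ) (nbrs d) ⊆ T := by
        intro x hx
        rcases Finset.mem_insert.1 hx with h | h
        · exact h ▸ h0T
        · exact hnT h
      rw [← Finset.sum_subset hsub ?_]
      · rw [Finset.sum_insert h0nbrs]
        have hD0 : ∑ z ∈ nbrs d, (gext (0 + z) - gext 0) ^ 2
            - ∑ z ∈ nbrs d, (g' (0 + z) - g' 0) ^ 2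
            = ∑ z ∈ nbrs d, (g' z * (2 * (g' 0 - a)) + (a ^ 2 - g' 0 ^ 2)) := by
          rw [← Finset.sum_sub_distrib]
          refine Finset.sum_congr rfl fun z hz => ?_
          rw [zero_add, hgext0, hgextne z (nbrs_ne_zero hz)]
          ring
        have hDn : ∀ w ∈ nbrs d, ∑ z ∈ nbrs d, (gext (w + z) - gext w) ^ 2
            - ∑ z ∈ nbrs d, (g' (w + z) - g' w) ^ 2
            = g' w * (2 * (g' 0 - a)) + (a ^ 2 - g' 0 ^ 2) := by
          intro w hw
          have hw0 : w ≠ 0 := nbrs_ne_zero hw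
          have hmw : -w ∈ nbrs d := nbrs_neg_mem hw
          rw [← Finset.add_sum_erase _ _ hmw,
            ← Finset.add_sum_erase _ (fun z => (g' (w + z) - g' w) ^ 2) hmw]
          have htail : ∑ z ∈ (nbrs d).erase (-w), (gext (w + z) - gext w) ^ 2
              = ∑ z ∈ (nbrs d).erase (-w), (g' (w + z) - g' w) ^ 2 := by
            refine Finset.sum_congr rfl fun z hz => ?_
            have hz0 : w + z ≠ 0 := fun hc =>
              (Finset.mem_erase.1 hz).1 (eq_neg_of_add_eq_zero_right hc)
            rw [hgextne _ hz0, hgextne w hw0]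
          rw [htail, add_neg_cancel, hgext0, hgextne w hw0]
          ring
        rw [hD0, Finset.sum_congr rfl hDn]
        linarith [hsum_lin]
      · intro x hxT hx
        have hx0 : x ≠ 0 := fun h => hx (h ▸ Finset.mem_insert_self _ _)
        have hxn : x ∉ nbrs d := fun h => hx (Finset.mem_insert_of_mem h)
        have : ∀ z ∈ nbrs d, x + z ≠ 0 := by
          intro z hz hc
          exact hxn (by rw [eq_neg_of_add_eq_zero_left hc]; exact nbrs_neg_mem hz)
        rw [sub_eq_zero]
        refine Finset.sum_congr rfl fun z hz => ?_
        rw [hgextne _ (this z hz), hgextne x hx0]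
    rw [Finset.sum_sub_distrib] at key
    linarith
  -- (iii) bound a² by the boundary term
  have ha2 : a ^ 2 ≤ (g' 0 - S) ^ 2 + 6 * g' 0 ^ 2 := by
    have heq : a ^ 2 * (2 * (d : ℝ)) ^ 2 = S ^ 2 := by rw [hSa]; ring
    have hd1 : (1 : ℝ) ≤ d := by exact_mod_cast hd
    have h4 : (4 : ℝ) ≤ (2 * (d : ℝ)) ^ 2 := by nlinarith [hd1]
    nlinarith [sq_nonneg (7 * g' 0 - S), sq_nonneg S, sq_nonneg a,
      mul_nonneg (sq_nonneg a) (sub_nonneg.2 h4)]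
  -- final assembly
  have hg0S1 : g' 0 ^ 2 ≤ ∑ x ∈ T, g' x ^ 2 :=
    Finset.single_le_sum (fun i _ => sq_nonneg (g' i)) h0T
  have hGpos : (0:ℝ) ≤ ∑ x ∈ T, ∑ z ∈ nbrs d, (g' (x + z) - g' x) ^ 2 :=
    Finset.sum_nonneg fun x _ => Finset.sum_nonneg fun z _ => sq_nonneg _
  have hS1pos : (0:ℝ) ≤ ∑ x ∈ T, g' x ^ 2 :=
    Finset.sum_nonneg fun x _ => sq_nonneg _
  have l1 : lam * a ^ 2 ≤ lam * ((g' 0 - S) ^ 2 + 6 * g' 0 ^ 2) :=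
    mul_le_mul_of_nonneg_left ha2 hlam.le
  have l2 : lam * g' 0 ^ 2 ≤ lam * ∑ x ∈ T, g' x ^ 2 :=
    mul_le_mul_of_nonneg_left hg0S1 hlam.le
  have l3 : lam * (g' 0 - S) ^ 2 ≤ (g' 0 - S) ^ 2 := by
    nlinarith [sq_nonneg (g' 0 - S)]
  have l4 : 0 ≤ lam * ∑ x ∈ T, g' x ^ 2 := mul_nonneg hlam.le hS1pos
  nlinarith [mul_le_mul_of_nonneg_left hGrad (by norm_num : (0:ℝ) ≤ 1/2),
    sq_nonneg (g' 0 - S), hS1, l1, l2, l3, l4, hGpos]
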